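/- Let u ∈ C²([0,1]) with continuity modulus ω(u'', ·) of its second derivative. Then for the pointwise-sampled vector z_n = (u(x_1), …, u(x_n)) with x_k = k/(n+1), the L² norm of the difference between the piecewise-constant extension of the centred second finite difference A_n z_n and u'' is bounded: ‖E_n A_n z_n − u''‖_{L²(0,1)} ≤ ω(u'', Δ_n), where Δ_n = 1/(n+1) and (A_n z)_k = (z_{k+1} − 2z_k + z_{k−1})/Δ_n² with z_0 = z_{n+1} = 0 (valid since u has compact support in (0,1)). -/

import Mathlib

open MeasureTheory

set_option maxHeartbeats 2000000

/-- linear-weight expansion -/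
lemma linexp {g : ℝ → ℝ} (gc : Continuous g) (a b c d : ℝ) :
    ∫ t in a..b, (c + d*t) * g t
      = c*(∫ t in a..b, g t) + d*(∫ t in a..b, t * g t) := by
  have h1 : IntervalIntegrable (fun t => c * g t) volume a b := by
    apply Continuous.intervalIntegrable; fun_prop
  have h2 : IntervalIntegrable (fun t => d * (t * g t)) volume a b := by
    apply Continuous.intervalIntegrable; fun_prop
  calc ∫ t in a..b, (c + d*t) * g t
      = ∫ t in a..b, (c * g t + d * (t * g t)) := by
        apply intervalIntegral.integral_congr; intro t _; ring
    _ = (∫ t in a..b, c * g t) + ∫ t in a..b, d * (t * g t) :=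
        intervalIntegral.integral_add h1 h2
    _ = c*(∫ t in a..b, g t) + d*(∫ t in a..b, t * g t) := by
        rw [intervalIntegral.integral_const_mul, intervalIntegral.integral_const_mul]

/-- polynomial integral -/
lemma polyint (a b c d : ℝ) :
    ∫ t in a..b, (c + d*t) = c*(b-a) + d*((b^2-a^2)/2) := by
  have h1 : IntervalIntegrable (fun _ : ℝ => c) volume a b := intervalIntegrable_const
  have h2 : IntervalIntegrable (fun t : ℝ => d * t) volume a b := by
    apply Continuous.intervalIntegrable; fun_prop
  calc ∫ t in a..b, (c + d*t)
      = (∫ _ in a..b, c) + ∫ t in a..b, d * t := intervalIntegral.integral_add h1 h2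
    _ = c*(b-a) + d*((b^2-a^2)/2) := by
        rw [intervalIntegral.integral_const, intervalIntegral.integral_const_mul, integral_id]
        simp [smul_eq_mul]; ring

/-- weighted bound -/
lemma wbound {w h : ℝ → ℝ} {a b M : ℝ} (hab : a ≤ b)
    (hw : Continuous w) (hh : Continuous h)
    (hw0 : ∀ t ∈ Set.Icc a b, 0 ≤ w t) (hhM : ∀ t ∈ Set.Icc a b, |h t| ≤ M) :
    |∫ t in a..b, w t * h t| ≤ M * ∫ t in a..b, w t := by
  have hint1 : IntervalIntegrable (fun t => w t * h t) volume a b :=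
    (hw.mul hh).intervalIntegrable _ _
  have hint2 : IntervalIntegrable (fun t => w t * M) volume a b :=
    (hw.mul continuous_const).intervalIntegrable _ _
  have hint3 : IntervalIntegrable (fun t => w t * (-M)) volume a b :=
    (hw.mul continuous_const).intervalIntegrable _ _
  have h1 : ∫ t in a..b, w t * h t ≤ ∫ t in a..b, w t * M := by
    apply intervalIntegral.integral_mono_on hab hint1 hint2
    intro t ht
    have := hhM t ht
    have := hw0 t ht
    nlinarith [abs_le.mp (hhM t ht)]
  have h2 : ∫ t in a..b, w t * (-M) ≤ ∫ t in a..b, w t * h t := by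
    apply intervalIntegral.integral_mono_on hab hint3 hint1
    intro t ht
    nlinarith [abs_le.mp (hhM t ht), hw0 t ht]
  have e1 : ∫ t in a..b, w t * M = M * ∫ t in a..b, w t := by
    rw [← intervalIntegral.integral_const_mul]
    apply intervalIntegral.integral_congr; intro t _; simp [mul_comm]
  have e2 : ∫ t in a..b, w t * (-M) = -(M * ∫ t in a..b, w t) := by
    rw [show -(M * ∫ t in a..b, w t) = (-M) * ∫ t in a..b, w t by ring,
      ← intervalIntegral.integral_const_mul]
    apply intervalIntegral.integral_congr; intro t _; simp [mul_comm]
  rw [abs_le]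
  constructor
  · linarith [h2, e2.symm.le]
  · linarith [h1, e1.le]

/-- integral bound on a piece given bound on Ico -/
lemma piece_bound {F : ℝ → ℝ} {a b C : ℝ} (hF : IntervalIntegrable F volume a b)
    (hab : a ≤ b) (h : ∀ s ∈ Set.Ico a b, F s ≤ C) :
    ∫ s in a..b, F s ≤ (b - a) * C := by
  have hC : IntervalIntegrable (fun _ => C) volume a b := intervalIntegrable_const
  have hae : F ≤ᵐ[volume.restrict (Set.Icc a b)] (fun _ => C) := by
    have hb : ∀ᵐ s ∂(volume.restrict (Set.Icc a b)), s ≠ b := by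
      apply ae_restrict_of_ae
      rw [ae_iff]
      simpa using (Real.volume_singleton (x := b))
    have hmem : ∀ᵐ s ∂(volume.restrict (Set.Icc a b)), s ∈ Set.Icc a b :=
      ae_restrict_mem measurableSet_Icc
    filter_upwards [hb, hmem] with s hs hmem'
    exact h s ⟨hmem'.1, lt_of_le_of_ne hmem'.2 hs⟩
  calc ∫ s in a..b, F s ≤ ∫ s in a..b, (C : ℝ) :=
        intervalIntegral.integral_mono_ae_restrict hab hF hC hae
    _ = (b - a) * C := by rw [intervalIntegral.integral_const]; simp [smul_eq_mul]
set_option maxHeartbeats 1000000 in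
/-- expansion of `∫ (c+dt)(g t - e)` -/
lemma hsub_gen {g : ℝ → ℝ} (gc : Continuous g) (a b c d e : ℝ) :
    ∫ t in a..b, (c + d*t) * (g t - e)
      = c*(∫ t in a..b, g t) + d*(∫ t in a..b, t * g t)
        - (c*(b-a) + d*((b^2-a^2)/2)) * e := by
  have h1 : IntervalIntegrable (fun t => (c + d*t) * g t) volume a b := by
    apply Continuous.intervalIntegrable; fun_prop
  have h2 : IntervalIntegrable (fun t => (c + d*t) * e) volume a b := by
    apply Continuous.intervalIntegrable; fun_prop
  have e1 : ∫ t in a..b, (c + d*t) * (g t - e)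
      = (∫ t in a..b, (c + d*t) * g t) - (∫ t in a..b, (c + d*t) * e) := by
    rw [← intervalIntegral.integral_sub h1 h2]
    apply intervalIntegral.integral_congr; intro t _; ring
  have e2 : ∫ t in a..b, (c + d*t) * e = (∫ t in a..b, (c + d*t)) * e :=
    intervalIntegral.integral_mul_const e (fun t => c + d*t)
  rw [e1, linexp gc, e2, polyint]

set_option maxHeartbeats 1600000 in
lemma cell_est {g : ℝ → ℝ} (gc : Continuous g) {x Δ W A : ℝ} (hΔ : 0 < Δ)
    (hW : ∀ s t : ℝ, |s - t| ≤ Δ → |g s - g t| ≤ W)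
    (hA : A * Δ^2 = (∫ t in x..(x+Δ), ((x+Δ) - t) * g t)
        + (∫ t in x..(x-Δ), ((x-Δ) - t) * g t)) :
    ∫ s in (x-Δ/2)..(x+Δ/2), (A - g s)^2 ≤ Δ * W^2 := by
  have hW0 : 0 ≤ W := le_trans (abs_nonneg _) (hW 0 0 (by simp [hΔ.le]))
  have hgi : ∀ a b : ℝ, IntervalIntegrable g volume a b :=
    fun a b => gc.intervalIntegrable _ _
  have hb : ∀ t ∈ Set.Icc (x-Δ) (x+Δ), |g t - g x| ≤ W := by
    intro t ht
    apply hW t x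
    rw [abs_le]; constructor
    · linarith [ht.1]
    · linarith [ht.2]
  -- canonical form of hA
  have hA' : A * Δ^2 = (∫ t in x..(x+Δ), ((x+Δ) + (-1)*t) * g t)
      + (∫ t in x..(x-Δ), ((x-Δ) + (-1)*t) * g t) := by
    rw [hA]; congr 1 <;> (apply intervalIntegral.integral_congr; intro t _; ring)
  -- splits
  have i1 : IntervalIntegrable (fun t => ((x+Δ) + (-1)*t) * g t) volume x (x+Δ/2) := by
    apply Continuous.intervalIntegrable; fun_prop
  have i2 : IntervalIntegrable (fun t => ((x+Δ) + (-1)*t) * g t) volume (x+Δ/2) (x+Δ) := by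
    apply Continuous.intervalIntegrable; fun_prop
  have i3 : IntervalIntegrable (fun t => ((x-Δ) + (-1)*t) * g t) volume (x-Δ) (x-Δ/2) := by
    apply Continuous.intervalIntegrable; fun_prop
  have i4 : IntervalIntegrable (fun t => ((x-Δ) + (-1)*t) * g t) volume (x-Δ/2) x := by
    apply Continuous.intervalIntegrable; fun_prop
  have split1 : (∫ t in x..(x+Δ), ((x+Δ) + (-1)*t) * g t)
      = (∫ t in x..(x+Δ/2), ((x+Δ) + (-1)*t) * g t)
        + (∫ t in (x+Δ/2)..(x+Δ), ((x+Δ) + (-1)*t) * g t) :=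
    (intervalIntegral.integral_add_adjacent_intervals i1 i2).symm
  have symm2 : (∫ t in x..(x-Δ), ((x-Δ) + (-1)*t) * g t)
      = -(∫ t in (x-Δ)..x, ((x-Δ) + (-1)*t) * g t) :=
    intervalIntegral.integral_symm _ _
  have split2 : (∫ t in (x-Δ)..x, ((x-Δ) + (-1)*t) * g t)
      = (∫ t in (x-Δ)..(x-Δ/2), ((x-Δ) + (-1)*t) * g t)
        + (∫ t in (x-Δ/2)..x, ((x-Δ) + (-1)*t) * g t) :=
    (intervalIntegral.integral_add_adjacent_intervals i3 i4).symm
  have splitg : (∫ s in (x-Δ/2)..(x+Δ/2), g s)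
      = (∫ s in (x-Δ/2)..x, g s) + (∫ s in x..(x+Δ/2), g s) :=
    (intervalIntegral.integral_add_adjacent_intervals (hgi _ _) (hgi _ _)).symm
  -- key identity
  have key : A*Δ^2 - Δ*(∫ s in (x-Δ/2)..(x+Δ/2), g s)
      = -(∫ t in x..(x+Δ/2), ((-x) + 1*t) * (g t - g x))
        + (∫ t in (x+Δ/2)..(x+Δ), ((x+Δ) + (-1)*t) * (g t - g x))
        - (∫ t in (x-Δ/2)..x, (x + (-1)*t) * (g t - g x))
        + (∫ t in (x-Δ)..(x-Δ/2), ((-(x-Δ)) + 1*t) * (g t - g x)) := by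
    rw [hA', split1, symm2, split2, splitg, linexp gc, linexp gc, linexp gc, linexp gc,
      hsub_gen gc, hsub_gen gc, hsub_gen gc, hsub_gen gc]
    ring
  -- bounds on the four pieces
  have b1 : |∫ t in x..(x+Δ/2), ((-x) + 1*t) * (g t - g x)| ≤ W * (Δ^2/8) := by
    have h := wbound (w := fun t => (-x) + 1*t) (h := fun t => g t - g x)
      (a := x) (b := x+Δ/2) (M := W) (by linarith) (by fun_prop) (by fun_prop)
      (fun t ht => by linarith [ht.1])
      (fun t ht => hb t ⟨by linarith [ht.1], by linarith [ht.2]⟩)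
    rw [polyint] at h
    refine h.trans (le_of_eq ?_)
    ring
  have b2 : |∫ t in (x+Δ/2)..(x+Δ), ((x+Δ) + (-1)*t) * (g t - g x)| ≤ W * (Δ^2/8) := by
    have h := wbound (w := fun t => (x+Δ) + (-1)*t) (h := fun t => g t - g x)
      (a := x+Δ/2) (b := x+Δ) (M := W) (by linarith) (by fun_prop) (by fun_prop)
      (fun t ht => by linarith [ht.2])
      (fun t ht => hb t ⟨by linarith [ht.1], by linarith [ht.2]⟩)
    rw [polyint] at h
    refine h.trans (le_of_eq ?_)
    ring
  have b3 : |∫ t in (x-Δ/2)..x, (x + (-1)*t) * (g t - g x)| ≤ W * (Δ^2/8) := by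
    have h := wbound (w := fun t => x + (-1)*t) (h := fun t => g t - g x)
      (a := x-Δ/2) (b := x) (M := W) (by linarith) (by fun_prop) (by fun_prop)
      (fun t ht => by linarith [ht.2])
      (fun t ht => hb t ⟨by linarith [ht.1], by linarith [ht.2]⟩)
    rw [polyint] at h
    refine h.trans (le_of_eq ?_)
    ring
  have b4 : |∫ t in (x-Δ)..(x-Δ/2), ((-(x-Δ)) + 1*t) * (g t - g x)| ≤ W * (Δ^2/8) := by
    have h := wbound (w := fun t => (-(x-Δ)) + 1*t) (h := fun t => g t - g x)
      (a := x-Δ) (b := x-Δ/2) (M := W) (by linarith) (by fun_prop) (by fun_prop)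
      (fun t ht => by linarith [ht.1])
      (fun t ht => hb t ⟨by linarith [ht.1], by linarith [ht.2]⟩)
    rw [polyint] at h
    refine h.trans (le_of_eq ?_)
    ring
  have dbound : |A*Δ^2 - Δ*(∫ s in (x-Δ/2)..(x+Δ/2), g s)| ≤ W * (Δ^2/2) := by
    rw [key]
    set q1 := ∫ t in x..(x+Δ/2), ((-x) + 1*t) * (g t - g x) with hq1
    set q2 := ∫ t in (x+Δ/2)..(x+Δ), ((x+Δ) + (-1)*t) * (g t - g x) with hq2
    set q3 := ∫ t in (x-Δ/2)..x, (x + (-1)*t) * (g t - g x) with hq3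
    set q4 := ∫ t in (x-Δ)..(x-Δ/2), ((-(x-Δ)) + 1*t) * (g t - g x) with hq4
    have e : -q1 + q2 - q3 + q4 = (((-q1) + q2) + (-q3)) + q4 := by ring
    rw [e]
    calc |(((-q1) + q2) + (-q3)) + q4|
        ≤ |((-q1) + q2) + (-q3)| + |q4| := abs_add_le _ _
      _ ≤ (|(-q1) + q2| + |(-q3)|) + |q4| := by linarith [abs_add_le ((-q1) + q2) (-q3)]
      _ ≤ ((|(-q1)| + |q2|) + |(-q3)|) + |q4| := by linarith [abs_add_le (-q1) q2]
      _ = |q1| + |q2| + |q3| + |q4| := by rw [abs_neg, abs_neg]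
      _ ≤ W * (Δ^2/8) + W * (Δ^2/8) + W * (Δ^2/8) + W * (Δ^2/8) := by
          linarith [b1, b2, b3, b4]
      _ = W * (Δ^2/2) := by ring
  -- the average
  have habar : |A - (∫ s in (x-Δ/2)..(x+Δ/2), g s) / Δ| ≤ W/2 := by
    have hΔ2 : (0:ℝ) < Δ^2 := by positivity
    have e : A - (∫ s in (x-Δ/2)..(x+Δ/2), g s) / Δ
        = (A*Δ^2 - Δ*(∫ s in (x-Δ/2)..(x+Δ/2), g s)) / Δ^2 := by
      field_simp
    rw [e, abs_div, abs_of_pos hΔ2, div_le_iff₀ hΔ2]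
    refine dbound.trans (le_of_eq ?_)
    ring
  set gbar : ℝ := (∫ s in (x-Δ/2)..(x+Δ/2), g s) / Δ with hgbar
  -- midrange bound
  have hlr : x - Δ/2 ≤ x + Δ/2 := by linarith
  obtain ⟨p, hpmem, hpmax⟩ := isCompact_Icc.exists_isMaxOn
    (Set.nonempty_Icc.mpr hlr) gc.continuousOn
  obtain ⟨q, hqmem, hqmin⟩ := isCompact_Icc.exists_isMinOn
    (Set.nonempty_Icc.mpr hlr) gc.continuousOn
  have hpq : g p - g q ≤ W := by
    have h1 : |p - q| ≤ Δ := by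
      rw [abs_le]
      constructor
      · linarith [hpmem.1, hqmem.2]
      · linarith [hpmem.2, hqmem.1]
    exact le_trans (le_abs_self _) (hW p q h1)
  have hcb : ∀ s ∈ Set.Icc (x-Δ/2) (x+Δ/2), ((g p + g q)/2 - g s)^2 ≤ (W/2)^2 := by
    intro s hs
    have h1 : g s ≤ g p := hpmax hs
    have h2 : g q ≤ g s := hqmin hs
    nlinarith
  have int_c : ∫ s in (x-Δ/2)..(x+Δ/2), ((g p + g q)/2 - g s)^2 ≤ Δ * (W/2)^2 := by
    have h := intervalIntegral.integral_mono_on (μ := volume) (a := x-Δ/2) (b := x+Δ/2)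
      (f := fun s => ((g p + g q)/2 - g s)^2) (g := fun _ => (W/2)^2) hlr
      (by apply Continuous.intervalIntegrable; fun_prop) intervalIntegrable_const hcb
    rw [intervalIntegral.integral_const, smul_eq_mul] at h
    refine h.trans (le_of_eq ?_)
    ring
  -- expansion of ∫ (A' - g)^2
  have expand : ∀ A' : ℝ, ∫ s in (x-Δ/2)..(x+Δ/2), (A' - g s)^2
      = A'^2*Δ - 2*A'*(∫ s in (x-Δ/2)..(x+Δ/2), g s)
        + ∫ s in (x-Δ/2)..(x+Δ/2), (g s)^2 := by
    intro A'
    have e : ∫ s in (x-Δ/2)..(x+Δ/2), (A' - g s)^2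
        = ∫ s in (x-Δ/2)..(x+Δ/2), (A'^2 + ((-(2*A'))*g s + (g s)^2)) := by
      apply intervalIntegral.integral_congr; intro t _; ring
    rw [e, intervalIntegral.integral_add intervalIntegrable_const
        (by apply Continuous.intervalIntegrable; fun_prop),
      intervalIntegral.integral_add
        (by apply Continuous.intervalIntegrable; fun_prop)
        (by apply Continuous.intervalIntegrable; fun_prop),
      intervalIntegral.integral_const, intervalIntegral.integral_const_mul, smul_eq_mul]
    ring
  have hint_g : (∫ s in (x-Δ/2)..(x+Δ/2), g s) = Δ * gbar := by
    rw [hgbar]; field_simp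
  have min_bar : ∫ s in (x-Δ/2)..(x+Δ/2), (gbar - g s)^2
      ≤ ∫ s in (x-Δ/2)..(x+Δ/2), ((g p + g q)/2 - g s)^2 := by
    rw [expand gbar, expand ((g p + g q)/2), hint_g]
    nlinarith [sq_nonneg (gbar - (g p + g q)/2), hΔ]
  -- final assembly
  have pointwise : ∀ s ∈ Set.Icc (x-Δ/2) (x+Δ/2),
      (A - g s)^2 ≤ 2*(A-gbar)^2 + 2*(gbar - g s)^2 := by
    intro s _
    nlinarith [sq_nonneg ((A - gbar) - (gbar - g s))]
  have step1 : ∫ s in (x-Δ/2)..(x+Δ/2), (A - g s)^2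
      ≤ ∫ s in (x-Δ/2)..(x+Δ/2), (2*(A-gbar)^2 + 2*(gbar - g s)^2) :=
    intervalIntegral.integral_mono_on hlr
      (by apply Continuous.intervalIntegrable; fun_prop)
      (by apply Continuous.intervalIntegrable; fun_prop) pointwise
  have step2 : ∫ s in (x-Δ/2)..(x+Δ/2), (2*(A-gbar)^2 + 2*(gbar - g s)^2)
      = 2*(A-gbar)^2*Δ + 2*(∫ s in (x-Δ/2)..(x+Δ/2), (gbar - g s)^2) := by
    rw [intervalIntegral.integral_add intervalIntegrable_const
        (by apply Continuous.intervalIntegrable; fun_prop),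
      intervalIntegral.integral_const, intervalIntegral.integral_const_mul, smul_eq_mul]
    ring
  have habar2 : (A - gbar)^2 ≤ (W/2)^2 := by
    have h := abs_le.mp habar
    nlinarith [h.1, h.2]
  calc ∫ s in (x-Δ/2)..(x+Δ/2), (A - g s)^2
      ≤ 2*(A-gbar)^2*Δ + 2*(∫ s in (x-Δ/2)..(x+Δ/2), (gbar - g s)^2) := by
        rw [← step2]; exact step1
    _ ≤ 2*(W/2)^2*Δ + 2*(Δ * (W/2)^2) := by
        nlinarith [le_trans min_bar int_c, hΔ.le, habar2]
    _ = Δ * W^2 := by ring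

/-- For `u ∈ C²_c((0,1))`, the `L²(0,1)` distance between the piecewise-constant
extension of the centred second finite difference of the sampled values of `u` and
`u''` is bounded by the modulus of continuity `ω(u'', Δ_n)`, `Δ_n = 1/(n+1)`. -/
theorem stmt_8 (n : ℕ) (hn : 1 ≤ n) (Δ : ℝ) (hΔ : Δ = 1 / (n + 1))
    (u : ℝ → ℝ) (hu : ContDiff ℝ 2 u) (hsupp : tsupport u ⊆ Set.Ioo (0:ℝ) 1)
    (x : Fin n → ℝ) (hx : ∀ k : Fin n, x k = ((k : ℕ) + 1) * Δ)
    (Az : Fin n → ℝ)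
    (hAz : ∀ k : Fin n, Az k =
      (u ((((k : ℕ) + 2) : ℝ) * Δ) - 2 * u ((((k : ℕ) + 1) : ℝ) * Δ)
        + u (((k : ℕ) : ℝ) * Δ)) / Δ ^ 2)
    (ω : ℝ → ℝ)
    (hω : ∀ d : ℝ, ω d =
      sSup {y : ℝ | ∃ s t : ℝ, |s - t| ≤ d ∧ y = |deriv (deriv u) s - deriv (deriv u) t|}) :
    Real.sqrt (∫ s in (0:ℝ)..1,
        ((∑ k : Fin n, Az k *
            Set.indicator (Set.Ico (x k - Δ / 2) (x k + Δ / 2)) (fun _ => (1:ℝ)) s)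
          - deriv (deriv u) s) ^ 2) ≤ ω Δ := by
  have hΔpos : 0 < Δ := by rw [hΔ]; positivity
  have hΔ1 : ((n:ℝ) + 1) * Δ = 1 := by rw [hΔ]; field_simp
  set g : ℝ → ℝ := deriv (deriv u) with hg
  -- smoothness facts
  have hu2 : ContDiff ℝ ((1:ℕ) + 1) u := by exact_mod_cast hu
  have hdu : Differentiable ℝ u := (contDiff_succ_iff_deriv.mp hu2).1
  have hu' : ContDiff ℝ 1 (deriv u) := (contDiff_succ_iff_deriv.mp hu2).2.2
  have hddu : Differentiable ℝ (deriv u) := (contDiff_one_iff_deriv.mp hu').1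
  have gc : Continuous g := (contDiff_one_iff_deriv.mp hu').2
  have hd1 : ∀ t : ℝ, HasDerivAt u (deriv u t) t := fun t => (hdu t).hasDerivAt
  have hd2 : ∀ t : ℝ, HasDerivAt (deriv u) (g t) t := fun t => (hddu t).hasDerivAt
  -- support facts
  have hsupp_g : ∀ t : ℝ, t ∉ Set.Ioo (0:ℝ) 1 → g t = 0 := by
    intro t ht
    have h1 : tsupport (deriv u) ⊆ tsupport u :=
      closure_minimal (support_deriv_subset) (isClosed_tsupport u)
    have h2 : Function.support g ⊆ tsupport u := (support_deriv_subset).trans h1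
    by_contra hne
    exact ht (hsupp (h2 hne))
  -- global bound on g
  obtain ⟨p0, _, hp0⟩ := isCompact_Icc.exists_isMaxOn
    (⟨0, by norm_num⟩ : (Set.Icc (0:ℝ) 1).Nonempty) (gc.abs.continuousOn)
  have hB : ∀ t : ℝ, |g t| ≤ |g p0| := by
    intro t
    by_cases ht : t ∈ Set.Icc (0:ℝ) 1
    · exact hp0 ht
    · have : g t = 0 := hsupp_g t (fun hmem => ht ⟨hmem.1.le, hmem.2.le⟩)
      rw [this]; simp [abs_nonneg]
  -- ω facts
  have hbdd : BddAbove {y : ℝ | ∃ s t : ℝ, |s - t| ≤ Δ ∧ y = |g s - g t|} := by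
    refine ⟨2 * |g p0|, ?_⟩
    rintro y ⟨s, t, _, rfl⟩
    calc |g s - g t| ≤ |g s| + |g t| := abs_sub _ _
      _ ≤ 2 * |g p0| := by linarith [hB s, hB t]
  have hωd : ∀ s t : ℝ, |s - t| ≤ Δ → |g s - g t| ≤ ω Δ := by
    intro s t h
    rw [hω]
    exact le_csSup hbdd ⟨s, t, h, rfl⟩
  have hω0 : 0 ≤ ω Δ := le_trans (abs_nonneg _) (hωd 0 0 (by simp [hΔpos.le]))
  -- Taylor with FTC
  have taylor : ∀ xx b : ℝ, ∫ t in xx..b, (b - t) * g t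
      = u b - u xx - (b - xx) * deriv u xx := by
    intro xx b
    have hF : ∀ t ∈ Set.uIcc xx b,
        HasDerivAt (fun t => u t + (b - t) * deriv u t) ((b - t) * g t) t := by
      intro t _
      have h0 : HasDerivAt (fun t : ℝ => b - t) (-1) t := by
        simpa using (hasDerivAt_id t).const_sub b
      have h1 : HasDerivAt (fun t => (b - t) * deriv u t)
          ((-1) * deriv u t + (b - t) * g t) t := h0.mul (hd2 t)
      have h2 : HasDerivAt (fun t => u t + (b - t) * deriv u t)
          (deriv u t + ((-1) * deriv u t + (b - t) * g t)) t := (hd1 t).add h1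
      convert h2 using 1
      ring
    have hcont : IntervalIntegrable (fun t => (b - t) * g t) volume xx b := by
      apply Continuous.intervalIntegrable; fun_prop
    rw [intervalIntegral.integral_eq_sub_of_hasDerivAt hF hcont]
    simp
    ring
  -- the integrand
  set F : ℝ → ℝ := fun s => ((∑ k : Fin n, Az k *
      Set.indicator (Set.Ico (x k - Δ / 2) (x k + Δ / 2)) (fun _ => (1:ℝ)) s)
      - g s) ^ 2 with hFdef
  -- integrability of F
  have hmE : Measurable (fun s => ∑ k : Fin n, Az k *
      Set.indicator (Set.Ico (x k - Δ / 2) (x k + Δ / 2)) (fun _ => (1:ℝ)) s) := by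
    apply Finset.measurable_sum
    intro k _
    exact (measurable_const.indicator measurableSet_Ico).const_mul (Az k)
  have hmF : Measurable F := by
    rw [hFdef]
    exact ((hmE.sub gc.measurable).pow_const 2)
  have hEb : ∀ s : ℝ, |∑ k : Fin n, Az k *
      Set.indicator (Set.Ico (x k - Δ / 2) (x k + Δ / 2)) (fun _ => (1:ℝ)) s|
      ≤ ∑ k : Fin n, |Az k| := by
    intro s
    calc |∑ k : Fin n, Az k * Set.indicator _ (fun _ => (1:ℝ)) s|
        ≤ ∑ k : Fin n, |Az k * Set.indicator (Set.Ico (x k - Δ / 2) (x k + Δ / 2))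
            (fun _ => (1:ℝ)) s| := Finset.abs_sum_le_sum_abs _ _
      _ ≤ ∑ k : Fin n, |Az k| := by
          apply Finset.sum_le_sum
          intro k _
          rw [abs_mul]
          by_cases hmem : s ∈ Set.Ico (x k - Δ / 2) (x k + Δ / 2)
          · rw [Set.indicator_of_mem hmem]; simp
          · rw [Set.indicator_of_notMem hmem]; simp [abs_nonneg]
  have hFint : ∀ a b : ℝ, IntervalIntegrable F volume a b := by
    intro a b
    apply IntervalIntegrable.mono_fun'
      (g := fun _ => ((∑ k : Fin n, |Az k|) + |g p0|)^2)
      intervalIntegrable_const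
      (hmF.aestronglyMeasurable.restrict)
    apply ae_of_all
    intro s
    have h1 := hEb s
    have h2 := hB s
    have h3 : (0:ℝ) ≤ ∑ k : Fin n, |Az k| :=
      Finset.sum_nonneg (fun k _ => abs_nonneg _)
    simp only [hFdef, Real.norm_eq_abs]
    rw [abs_of_nonneg (sq_nonneg _)]
    have h4 := abs_le.mp h1
    have h5 := abs_le.mp h2
    nlinarith
  -- partition
  set a : ℕ → ℝ := fun i => max 0 (min 1 (((i:ℝ) - 1/2) * Δ)) with ha
  have hav : ∀ i : ℕ, 1 ≤ i → i ≤ n+1 → a i = ((i:ℝ) - 1/2) * Δ := by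
    intro i h1 h2
    have hi1 : (1:ℝ) ≤ (i:ℝ) := by exact_mod_cast h1
    have hi2 : (i:ℝ) ≤ (n:ℝ)+1 := by exact_mod_cast h2
    have hge : (0:ℝ) ≤ ((i:ℝ) - 1/2) * Δ := by nlinarith
    have hle' : ((i:ℝ) - 1/2) * Δ ≤ 1 := by nlinarith
    rw [ha]
    simp only
    rw [min_eq_right hle', max_eq_right hge]
  have ha0 : a 0 = 0 := by
    rw [ha]
    simp only [Nat.cast_zero]
    rw [min_eq_right (by nlinarith), max_eq_left (by nlinarith)]
  have haN : a (n+2) = 1 := by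
    rw [ha]
    have h1 : (1:ℝ) ≤ ((((n+2:ℕ)):ℝ) - 1/2) * Δ := by push_cast; nlinarith
    simp only
    rw [min_eq_left h1, max_eq_right (by linarith)]
  have hamono : ∀ i : ℕ, a i ≤ a (i+1) := by
    intro i
    rw [ha]
    simp only
    apply max_le_max le_rfl
    apply min_le_min le_rfl
    have : ((i:ℝ)) ≤ ((i+1:ℕ):ℝ) := by push_cast; linarith
    nlinarith
  -- reduce to the integral bound
  suffices hI : ∫ s in (0:ℝ)..1, F s ≤ (ω Δ)^2 by
    have h := Real.sqrt_le_sqrt hI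
    rwa [Real.sqrt_sq hω0] at h
  -- split the integral
  have hsplit : ∫ s in (0:ℝ)..1, F s
      = ∑ i ∈ Finset.range (n+2), ∫ s in a i..a (i+1), F s := by
    have h := intervalIntegral.sum_integral_adjacent_intervals
      (a := a) (μ := volume) (f := F) (n := n+2) (fun k _ => hFint _ _)
    rw [ha0, haN] at h
    exact h.symm
  -- piecewise bounds
  have hpiece : ∀ i ∈ Finset.range (n+2),
      ∫ s in a i..a (i+1), F s ≤ (a (i+1) - a i) * (ω Δ)^2 := by
    intro i hi
    rw [Finset.mem_range] at hi
    by_cases hi0 : i = 0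
    · subst hi0
      have ha1 : a 1 = Δ/2 := by rw [hav 1 le_rfl (by omega)]; push_cast; ring
      apply piece_bound (hFint _ _) (by rw [ha0, ha1]; linarith)
      intro s hs
      rw [ha0, ha1] at hs
      have hEz : ∀ k : Fin n, Set.indicator (Set.Ico (x k - Δ / 2) (x k + Δ / 2))
          (fun _ => (1:ℝ)) s = 0 := by
        intro k
        apply Set.indicator_of_notMem
        intro hmem
        have hk0 : (0:ℝ) ≤ ((k:ℕ):ℝ) := Nat.cast_nonneg _
        have := hmem.1
        rw [hx k] at this
        nlinarith [hs.2]
      have hgs : |g s| ≤ ω Δ := by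
        have hz : g (s - Δ) = 0 := by
          apply hsupp_g
          intro hmem
          have := hmem.1
          nlinarith [hs.2]
        have := hωd s (s - Δ) (by rw [abs_of_nonneg (by linarith : (0:ℝ) ≤ s - (s-Δ))]; linarith)
        rwa [hz, sub_zero] at this
      simp only [hFdef]
      rw [Finset.sum_eq_zero (fun k _ => by rw [hEz k, mul_zero])]
      have h5 := abs_le.mp hgs
      nlinarith
    · by_cases hin : i = n+1
      · subst hin
        have han1 : a (n+1) = ((n:ℝ) + 1/2) * Δ := by
          rw [hav (n+1) (by omega) le_rfl]; push_cast; ring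
        apply piece_bound (hFint _ _) (by rw [han1, haN]; nlinarith)
        intro s hs
        rw [han1] at hs
        rw [haN] at hs
        have hEz : ∀ k : Fin n, Set.indicator (Set.Ico (x k - Δ / 2) (x k + Δ / 2))
            (fun _ => (1:ℝ)) s = 0 := by
          intro k
          apply Set.indicator_of_notMem
          intro hmem
          have hkn : ((k:ℕ):ℝ) + 1 ≤ (n:ℝ) := by
            have : (k:ℕ) + 1 ≤ n := k.2
            exact_mod_cast this
          have := hmem.2
          rw [hx k] at this
          nlinarith [hs.1]
        have hgs : |g s| ≤ ω Δ := by
          have hz : g (s + Δ) = 0 := by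
            apply hsupp_g
            intro hmem
            have := hmem.2
            nlinarith [hs.1]
          have := hωd s (s + Δ) (by rw [abs_of_nonpos (by linarith : s - (s+Δ) ≤ 0)]; linarith)
          rwa [hz, sub_zero] at this
        simp only [hFdef]
        rw [Finset.sum_eq_zero (fun k _ => by rw [hEz k, mul_zero])]
        have h5 := abs_le.mp hgs
        nlinarith
      · -- cell case: 1 ≤ i ≤ n
        have hi1 : 1 ≤ i := by omega
        have hin' : i ≤ n := by omega
        set k : Fin n := ⟨i - 1, by omega⟩ with hk
        have hk1 : ((k:ℕ):ℝ) + 1 = (i:ℝ) := by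
          have h1 : (k:ℕ) = i - 1 := rfl
          rw [h1]
          have : ((i - 1 : ℕ):ℝ) = (i:ℝ) - 1 := by
            have : (1:ℕ) ≤ i := hi1
            push_cast [Nat.cast_sub this]
            ring
          rw [this]; ring
        have hxk : x k = (i:ℝ) * Δ := by rw [hx k, hk1]
        have hai : a i = x k - Δ/2 := by
          rw [hav i hi1 (by omega), hxk]; ring
        have hai1 : a (i+1) = x k + Δ/2 := by
          rw [hav (i+1) (by omega) (by omega), hxk]; push_cast; ring
        -- replace F by the cell expression
        have hcongr : ∫ s in a i..a (i+1), F s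
            = ∫ s in (x k - Δ/2)..(x k + Δ/2), (Az k - g s)^2 := by
          rw [hai, hai1]
          apply intervalIntegral.integral_congr_ae
          have hne : ∀ᵐ s : ℝ, s ≠ x k + Δ/2 := by
            have hset : {s : ℝ | ¬ s ≠ x k + Δ/2} = {x k + Δ/2} := by ext; simp
            rw [ae_iff, hset]
            exact Real.volume_singleton
          filter_upwards [hne] with s hs hmem
          rw [Set.uIoc_of_le (by linarith : x k - Δ/2 ≤ x k + Δ/2)] at hmem
          have hmemIco : s ∈ Set.Ico (x k - Δ/2) (x k + Δ/2) :=
            ⟨hmem.1.le, lt_of_le_of_ne hmem.2 hs⟩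
          simp only [hFdef]
          congr 1
          rw [Finset.sum_eq_single k]
          · rw [Set.indicator_of_mem hmemIco]; ring
          · intro j _ hj
            rw [Set.indicator_of_notMem, mul_zero]
            intro hmemj
            have hjk : (j:ℕ) ≠ (k:ℕ) := fun h => hj (Fin.ext h)
            rcases lt_or_gt_of_ne hjk with hlt | hgt
            · -- j < k : cell of j is to the left
              have hcast : ((j:ℕ):ℝ) + 1 ≤ ((k:ℕ):ℝ) := by exact_mod_cast hlt
              have h1 := hmemj.2
              rw [hx j] at h1
              have h2 := hmemIco.1
              rw [hx k] at h2
              nlinarith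
            · have hcast : ((k:ℕ):ℝ) + 1 ≤ ((j:ℕ):ℝ) := by exact_mod_cast hgt
              have h1 := hmemj.1
              rw [hx j] at h1
              have h2 := hmemIco.2
              rw [hx k] at h2
              nlinarith
          · intro habs
            exact absurd (Finset.mem_univ k) habs
        -- Taylor identity for Az k
        have hA : Az k * Δ^2 = (∫ t in (x k)..(x k + Δ), ((x k + Δ) - t) * g t)
            + (∫ t in (x k)..(x k - Δ), ((x k - Δ) - t) * g t) := by
          have e1 : ((((k:ℕ):ℝ) + 2)) * Δ = x k + Δ := by
            rw [hx k]; ring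
          have e2 : ((((k:ℕ):ℝ) + 1)) * Δ = x k := (hx k).symm
          have e3 : (((k:ℕ)):ℝ) * Δ = x k - Δ := by
            rw [hx k]; ring
          rw [taylor (x k) (x k + Δ), taylor (x k) (x k - Δ), hAz k]
          rw [show ((((k:ℕ):ℝ) + 2)) * Δ = x k + Δ from e1,
            show ((((k:ℕ):ℝ) + 1)) * Δ = x k from e2, e3]
          field_simp
          ring
        have hcell := cell_est gc hΔpos hωd hA
        rw [hcongr]
        refine hcell.trans (le_of_eq ?_)
        rw [hai, hai1]
        ring
  -- assemble
  rw [hsplit]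
  calc ∑ i ∈ Finset.range (n+2), ∫ s in a i..a (i+1), F s
      ≤ ∑ i ∈ Finset.range (n+2), (a (i+1) - a i) * (ω Δ)^2 :=
        Finset.sum_le_sum hpiece
    _ = (∑ i ∈ Finset.range (n+2), (a (i+1) - a i)) * (ω Δ)^2 := by
        rw [Finset.sum_mul]
    _ = (a (n+2) - a 0) * (ω Δ)^2 := by rw [Finset.sum_range_sub a (n+2)]
    _ = (ω Δ)^2 := by rw [ha0, haN]; ring
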